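/- arXiv:2211.14195 — 5 statements merged into one kernel-verified Lean document; each statement's English description precedes it below -/
import Mathlib

section
/- Let θ ∈ ℤ^{Q0} with θ((V_i)_i) = 0 and set Q0⁺ := {i ∈ Q0 : θ_i ≥ 0}. If M is a θ-semi-stable representation of Q on (V_i), then for every vertex j ∈ Q0 the linear map ⊕_p V_{s(p)} → V_j, (v_p)_p ↦ Σ_p M_p(v_p), where p runs over all paths in Q with source s(p) ∈ Q0⁺ and target t(p) = j (including, when j ∈ Q0⁺, the trivial path at j), is surjective. (Equivalently: the canonical homomorphism φ_M : P⁺ → M from the projective representation P⁺ = ⊕_{i∈Q0⁺} P(i) ⊗ V_i is surjective.) -/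
/-!
The image `U` of `φ_M` is the subrepresentation generated by the spaces `V i` with `θ i ≥ 0`.
It is all of `V i` wherever `θ i ≥ 0`, so `θ(V) - θ(U) = ∑_{θ i < 0} θ i (dim V i - dim U i)`
is a sum of nonpositive terms, while semi-stability gives `θ(U) ≤ 0 = θ(V)`. Hence every term
vanishes, and `U = V` also at the vertices of negative weight.
-/

open Module

/-- Paths in a quiver with arrow set `Q1`, source map `src` and target map `tgt`.
`QPath src tgt i j` is the type of (oriented) paths from vertex `i` to vertex `j`;
`cons a p` appends the arrow `a` at the target end of the path `p`. -/
inductive QPath {Q0 Q1 : Type} (src tgt : Q1 → Q0) : Q0 → Q0 → Type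
  | nil (i : Q0) : QPath src tgt i i
  | cons {i : Q0} (a : Q1) (p : QPath src tgt i (src a)) : QPath src tgt i (tgt a)

/-- For a representation `M` of the quiver on the spaces `V i`, `pathMap M p` is the
composite linear map `M_p : V i →ₗ V j` along the path `p : QPath src tgt i j`. -/
def pathMap {k Q0 Q1 : Type} [Field k] {src tgt : Q1 → Q0} {V : Q0 → Type}
    [∀ i, AddCommGroup (V i)] [∀ i, Module k (V i)]
    (M : ∀ a : Q1, V (src a) →ₗ[k] V (tgt a)) :
    {i j : Q0} → QPath src tgt i j → (V i →ₗ[k] V j)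
  | _, _, QPath.nil _ => LinearMap.id
  | _, _, QPath.cons a p => (M a).comp (pathMap M p)

theorem eq_zero_of_sum_mul_nonneg {ι R : Type*} [Fintype ι] [CommRing R] [LinearOrder R]
    [IsStrictOrderedRing R] (θ d : ι → R) (hd : ∀ i, 0 ≤ d i) (hθd : ∀ i, 0 ≤ θ i → d i = 0)
    (hsum : 0 ≤ ∑ i, θ i * d i) (i : ι) : d i = 0 := by
  have hterm : ∀ i, θ i * d i ≤ 0 := fun i => by
    rcases le_or_gt 0 (θ i) with h | h
    · simp [hθd i h]
    · exact mul_nonpos_of_nonpos_of_nonneg h.le (hd i)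
  have hzero : θ i * d i = 0 :=
    (Finset.sum_eq_zero_iff_of_nonpos fun i _ => hterm i).mp
      (le_antisymm (Finset.sum_nonpos fun i _ => hterm i) hsum) i (Finset.mem_univ i)
  rcases le_or_gt 0 (θ i) with h | h
  · exact hθd i h
  · exact (mul_eq_zero.mp hzero).resolve_left h.ne

theorem eq_top_of_sum_mul_finrank_le {k ι : Type*} [Field k] [Fintype ι] {V : ι → Type*}
    [∀ i, AddCommGroup (V i)] [∀ i, Module k (V i)] [∀ i, FiniteDimensional k (V i)]
    (θ : ι → ℤ) (U : ∀ i, Submodule k (V i))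
    (hθU : ∑ i, θ i * (finrank k (U i) : ℤ) ≤ ∑ i, θ i * (finrank k (V i) : ℤ))
    (htop : ∀ i, 0 ≤ θ i → U i = ⊤) (i : ι) : U i = ⊤ := by
  have hcodim := eq_zero_of_sum_mul_nonneg θ
    (fun i => (finrank k (V i) : ℤ) - finrank k (U i))
    (fun i => sub_nonneg.mpr (by exact_mod_cast (U i).finrank_le))
    (fun i hi => by rw [htop i hi, finrank_top, sub_self])
    (by simpa only [mul_sub, Finset.sum_sub_distrib, sub_nonneg] using hθU) i
  exact Submodule.eq_top_of_finrank_eq (by omega)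

theorem surjective_sum_apply_of_iSup_range_eq_top {R ι N : Type*} {W : ι → Type*}
    [CommSemiring R] [Fintype ι] [AddCommMonoid N] [Module R N] [∀ i, AddCommMonoid (W i)]
    [∀ i, Module R (W i)] (f : ∀ i, W i →ₗ[R] N) (h : ⨆ i, LinearMap.range (f i) = ⊤) :
    Function.Surjective fun w : ∀ i, W i => ∑ i, f i (w i) := by
  classical
  have hrange : LinearMap.range (LinearMap.lsum R W R f) = ⊤ :=
    top_unique <| h ▸ iSup_le fun i => by
      rintro _ ⟨v, rfl⟩
      exact ⟨Pi.single i v, LinearMap.lsum_piSingle ..⟩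
  intro y
  obtain ⟨w, hw⟩ := LinearMap.range_eq_top.mp hrange y
  exact ⟨w, by simpa using hw⟩

section pathSpan

variable {k Q0 Q1 : Type} [Field k] {src tgt : Q1 → Q0} {V : Q0 → Type}
  [∀ i, AddCommGroup (V i)] [∀ i, Module k (V i)]

def pathSpan (M : ∀ a : Q1, V (src a) →ₗ[k] V (tgt a)) (S : Q0 → Prop) (j : Q0) :
    Submodule k (V j) :=
  ⨆ p : {p : Σ i : Q0, QPath src tgt i j // S p.1}, LinearMap.range (pathMap M p.1.2)

variable (M : ∀ a : Q1, V (src a) →ₗ[k] V (tgt a)) (S : Q0 → Prop)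

theorem map_mem_pathSpan (a : Q1) {x : V (src a)} (hx : x ∈ pathSpan M S (src a)) :
    M a x ∈ pathSpan M S (tgt a) := by
  suffices (pathSpan M S (src a)).map (M a) ≤ pathSpan M S (tgt a) from this ⟨x, hx, rfl⟩
  rw [pathSpan, Submodule.map_iSup]
  refine iSup_le fun p => ?_
  rw [← LinearMap.range_comp]
  exact le_iSup_of_le
    (⟨⟨p.1.1, .cons a p.1.2⟩, p.2⟩ : {q : Σ i, QPath src tgt i (tgt a) // S q.1})
    (by rw [pathMap])

theorem pathSpan_eq_top {j : Q0} (hj : S j) : pathSpan M S j = ⊤ :=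
  top_unique <| le_iSup_of_le (⟨⟨j, .nil j⟩, hj⟩ : {q : Σ i, QPath src tgt i j // S q.1})
    (by rw [pathMap, LinearMap.range_id])

end pathSpan

theorem statement0_general {k Q0 Q1 : Type} [Field k] [Fintype Q0]
    (src tgt : Q1 → Q0) [∀ i j, Fintype (QPath src tgt i j)]
    (V : Q0 → Type) [∀ i, AddCommGroup (V i)] [∀ i, Module k (V i)]
    [∀ i, FiniteDimensional k (V i)]
    (θ : Q0 → ℤ)
    (M : ∀ a : Q1, V (src a) →ₗ[k] V (tgt a))
    (hθ : ∑ i : Q0, θ i * (finrank k (V i) : ℤ) = 0)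
    (hss : ∀ U : ∀ i : Q0, Submodule k (V i),
        (∀ a : Q1, ∀ x ∈ U (src a), M a x ∈ U (tgt a)) →
        ∑ i : Q0, θ i * (finrank k (U i) : ℤ) ≤ 0)
    (j : Q0) :
    Function.Surjective
      (fun w : ∀ p : {p : Σ i : Q0, QPath src tgt i j // 0 ≤ θ p.1}, V p.1.1 =>
        ∑ p : {p : Σ i : Q0, QPath src tgt i j // 0 ≤ θ p.1}, pathMap M p.1.2 (w p)) := by
  have hspan : pathSpan M (0 ≤ θ ·) j = ⊤ :=
    eq_top_of_sum_mul_finrank_le θ (pathSpan M (0 ≤ θ ·))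
      ((hss _ fun a _ => map_mem_pathSpan M _ a).trans hθ.ge)
      (fun _ => pathSpan_eq_top M (0 ≤ θ ·)) j
  exact surjective_sum_apply_of_iSup_range_eq_top _ hspan

/-- If `M` is a θ-semi-stable representation of an acyclic quiver, then for every vertex `j`
the canonical map `⊕_p V_{s(p)} → V_j`, summing `M_p` over all paths `p` with source in
`Q0⁺ = {i : θ i ≥ 0}` and target `j`, is surjective (i.e. `φ_M : P⁺ → M` is surjective). -/
theorem statement0 {k Q0 Q1 : Type} [Field k] [Fintype Q0] [Fintype Q1] [DecidableEq Q0]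
    (src tgt : Q1 → Q0) [∀ i j, Fintype (QPath src tgt i j)]
    (V : Q0 → Type) [∀ i, AddCommGroup (V i)] [∀ i, Module k (V i)]
    [∀ i, FiniteDimensional k (V i)]
    (θ : Q0 → ℤ)
    (M : ∀ a : Q1, V (src a) →ₗ[k] V (tgt a))
    (hθ : ∑ i : Q0, θ i * (finrank k (V i) : ℤ) = 0)
    (hss : ∀ U : ∀ i : Q0, Submodule k (V i),
        (∀ a : Q1, ∀ x ∈ U (src a), M a x ∈ U (tgt a)) →
        ∑ i : Q0, θ i * (finrank k (U i) : ℤ) ≤ 0)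
    (j : Q0) :
    Function.Surjective
      (fun w : ∀ p : {p : Σ i : Q0, QPath src tgt i j // 0 ≤ θ p.1}, V p.1.1 =>
        ∑ p : {p : Σ i : Q0, QPath src tgt i j // 0 ≤ θ p.1}, pathMap M p.1.2 (w p)) :=
  statement0_general src tgt V θ M hθ hss j
end

section
/- Let θ ∈ ℤ^{Q0} with θ((V_i)_i) = 0 and set Q0⁻ := {i ∈ Q0 : θ_i ≤ 0}. If M is a θ-semi-stable representation of Q on (V_i), then for every vertex j ∈ Q0 the linear map V_j → ⊕_q V_{t(q)}, v ↦ (M_q(v))_q, where q runs over all paths in Q with source s(q) = j and target t(q) ∈ Q0⁻ (including, when j ∈ Q0⁻, the trivial path at j), is injective. (Equivalently: the canonical homomorphism ψ_M : M → I⁻ to the injective representation I⁻ = ⊕_{i∈Q0⁻} I(i) ⊗ V_i is injective.) -/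
open Module

/-- Prepend an arrow `a` to a path starting at `tgt a`. -/
def QPath.follow {Q0 Q1 : Type} {src tgt : Q1 → Q0} (a : Q1) :
    {l : Q0} → QPath src tgt (tgt a) l → QPath src tgt (src a) l
  | _, .nil _ => .cons a (.nil (src a))
  | _, .cons b p => .cons b (QPath.follow a p)

lemma pathMap_follow {k Q0 Q1 : Type} [Field k] {src tgt : Q1 → Q0} {V : Q0 → Type}
    [∀ i, AddCommGroup (V i)] [∀ i, Module k (V i)]
    (M : ∀ a : Q1, V (src a) →ₗ[k] V (tgt a)) (a : Q1) :
    ∀ {l : Q0} (p : QPath src tgt (tgt a) l),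
      pathMap M (QPath.follow a p) = (pathMap M p).comp (M a)
  | _, .nil _ => by simp [QPath.follow, pathMap]
  | _, .cons b p => by
    simp [QPath.follow, pathMap, pathMap_follow M a p, LinearMap.comp_assoc]

/-- If `M` is a θ-semi-stable representation of an acyclic quiver, then for every vertex `j`
the canonical map `V_j → ⊕_q V_{t(q)}`, given by `v ↦ (M_q v)_q` over all paths `q` with
source `j` and target in `Q0⁻ = {i : θ i ≤ 0}`, is injective (i.e. `ψ_M : M → I⁻` is
injective). -/
theorem statement1 {k Q0 Q1 : Type} [Field k] [Fintype Q0] [Fintype Q1] [DecidableEq Q0]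
    (src tgt : Q1 → Q0) [∀ i j, Fintype (QPath src tgt i j)]
    (V : Q0 → Type) [∀ i, AddCommGroup (V i)] [∀ i, Module k (V i)]
    [∀ i, FiniteDimensional k (V i)]
    (θ : Q0 → ℤ)
    (M : ∀ a : Q1, V (src a) →ₗ[k] V (tgt a))
    (hθ : ∑ i : Q0, θ i * (finrank k (V i) : ℤ) = 0)
    (hss : ∀ U : ∀ i : Q0, Submodule k (V i),
        (∀ a : Q1, ∀ x ∈ U (src a), M a x ∈ U (tgt a)) →
        ∑ i : Q0, θ i * (finrank k (U i) : ℤ) ≤ 0)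
    (j : Q0) :
    Function.Injective
      (fun v : V j =>
        fun q : {q : Σ i : Q0, QPath src tgt j i // θ q.1 ≤ 0} => pathMap M q.1.2 v) := by
  set U : ∀ i : Q0, Submodule k (V i) := fun i =>
    ⨅ q : {q : Σ l : Q0, QPath src tgt i l // θ q.1 ≤ 0},
      LinearMap.ker (pathMap M q.1.2) with hUdef
  have hmem : ∀ i (x : V i), x ∈ U i ↔
      ∀ q : {q : Σ l : Q0, QPath src tgt i l // θ q.1 ≤ 0}, pathMap M q.1.2 x = 0 := by
    intro i x
    simp [hUdef, Submodule.mem_iInf, LinearMap.mem_ker]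
  have hclosed : ∀ a : Q1, ∀ x ∈ U (src a), M a x ∈ U (tgt a) := by
    intro a x hx
    rw [hmem]
    rintro ⟨⟨l, p⟩, hl⟩
    have := (hmem _ x).1 hx ⟨⟨l, QPath.follow a p⟩, hl⟩
    simpa [pathMap_follow] using this
  have hsum := hss U hclosed
  have hbot : ∀ i, θ i ≤ 0 → U i = ⊥ := by
    intro i hi
    refine le_antisymm ?_ bot_le
    intro x hx
    have := (hmem i x).1 hx ⟨⟨i, QPath.nil i⟩, hi⟩
    simpa [pathMap] using this
  have hterm : ∀ i : Q0, 0 ≤ θ i * (finrank k (U i) : ℤ) := by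
    intro i
    rcases le_or_gt (θ i) 0 with hi | hi
    · rw [hbot i hi]
      simp
    · positivity
  have hall : ∀ i : Q0, θ i * (finrank k (U i) : ℤ) = 0 := by
    have := (Finset.sum_eq_zero_iff_of_nonneg (fun i _ => hterm i)).1
      (le_antisymm hsum (Finset.sum_nonneg (fun i _ => hterm i)))
    exact fun i => this i (Finset.mem_univ i)
  have hUbot : ∀ i, U i = ⊥ := by
    intro i
    rcases le_or_gt (θ i) 0 with hi | hi
    · exact hbot i hi
    · have := hall i
      have hr : (finrank k (U i) : ℤ) = 0 := by
        rcases mul_eq_zero.1 this with h | h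
        · omega
        · exact h
      have : finrank k (U i) = 0 := by exact_mod_cast hr
      exact Submodule.finrank_eq_zero.1 this
  intro v w h
  have hvw : v - w ∈ U j := by
    rw [hmem]
    intro q
    have := congrFun h q
    simp only [map_sub]
    simp only at this
    rw [this, sub_self]
  rw [hUbot j] at hvw
  simpa [sub_eq_zero] using hvw
end

section
/- Let M be a representation of Q on (V_i) and A = (A_i : E_i → V_i)_{i∈Q0} a family of linear maps. The following are equivalent: (a) for every subspace L ⊆ k and every subrepresentation U of M such that A_i(E_i) ⊆ U_i for all i ∈ Q0 whenever L = k, one has |α|·dim L − Σ_{i∈Q0} dim U_i ≤ 0 (i.e. the framed pair (M,A) is semi-stable for the stability parameter c^α with value |α| at the framing vertex and −1 at every vertex of Q); (b) the inequality in (a) is strict for every such pair (L,U) other than (0,(0)_i) and (k,(V_i)_i) (i.e. (M,A) is c^α-stable); (c) no subrepresentation U of M with U ≠ (V_i)_i satisfies A_i(E_i) ⊆ U_i for all i ∈ Q0; (d) for every j ∈ Q0 the linear map ⊕_p E_{s(p)} → V_j, (w_p)_p ↦ Σ_p M_p(A_{s(p)}(w_p)), where p runs over all paths in Q with target j (including the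 trivial path at j), is surjective (i.e. the homomorphism φ_{M,A} : P_β → M is surjective). -/
/-!
A subobject of the framed pair `(M, A)` is a pair `(L, U)` with `L = 0` or `L = k`. For `L = 0`
the slope `-∑ dim U_i` is negative unless `U = 0`. For `L = k` the subrepresentation `U` contains
the images of the `A_i`, and the slope `|α| - ∑ dim U_i` is nonnegative, vanishing iff `U = V`.
So semistability and stability both say that no proper subrepresentation contains the images of
the framing, and the smallest subrepresentation containing them is the image of `φ_{M,A}`.
-/

open Module

section Dimension

variable {k ι : Type*} [DivisionRing k] [Fintype ι] {V : ι → Type*}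
  [∀ i, AddCommGroup (V i)] [∀ i, Module k (V i)] {U : ∀ i, Submodule k (V i)}

lemma sum_finrank_lt_of_ne_top [∀ i, FiniteDimensional k (V i)] (hU : ¬ ∀ i, U i = ⊤) :
    ∑ i, finrank k (U i) < ∑ i, finrank k (V i) := by
  obtain ⟨i, hi⟩ := not_forall.mp hU
  exact Finset.sum_lt_sum (fun i _ => (U i).finrank_le) ⟨i, Finset.mem_univ i, (U i).finrank_lt hi⟩

lemma sum_finrank_pos_of_ne_bot [∀ i, FiniteDimensional k (V i)] (hU : ¬ ∀ i, U i = ⊥) :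
    0 < ∑ i, finrank k (U i) := by
  obtain ⟨i, hi⟩ := not_forall.mp hU
  exact Finset.sum_pos' (fun i _ => Nat.zero_le _)
    ⟨i, Finset.mem_univ i, Nat.pos_of_ne_zero fun h => hi (Submodule.finrank_eq_zero.mp h)⟩

end Dimension

section Framing

variable {k Q0 Q1 : Type} [Field k] {src tgt : Q1 → Q0} {V E : Q0 → Type}
  [∀ i, AddCommGroup (V i)] [∀ i, Module k (V i)] [∀ i, AddCommGroup (E i)] [∀ i, Module k (E i)]
  (M : ∀ a : Q1, V (src a) →ₗ[k] V (tgt a)) (A : ∀ i, E i →ₗ[k] V i)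

def IsSubrep (U : ∀ i, Submodule k (V i)) : Prop :=
  ∀ a : Q1, ∀ x ∈ U (src a), M a x ∈ U (tgt a)

variable {M} in
lemma IsSubrep.pathMap_mem {U : ∀ i, Submodule k (V i)} (hU : IsSubrep M U) {i j : Q0}
    (p : QPath src tgt i j) {x : V i} (hx : x ∈ U i) : pathMap M p x ∈ U j := by
  induction p with
  | nil => simpa [pathMap] using hx
  | cons a p ih => simpa [pathMap] using hU a _ ih

variable [Fintype Q0] [∀ i j, Fintype (QPath src tgt i j)]

/-- The component `φ_{M,A}` at `j`, with `P_β` at `j` written as `⊕_p E_{s(p)}` over paths `p`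
ending at `j`. -/
def framingMap (j : Q0) : (∀ p : Σ i : Q0, QPath src tgt i j, E p.1) →ₗ[k] V j :=
  ∑ p : Σ i : Q0, QPath src tgt i j, (pathMap M p.2 ∘ₗ A p.1) ∘ₗ LinearMap.proj p

lemma framingMap_apply (j : Q0) (w : ∀ p : Σ i : Q0, QPath src tgt i j, E p.1) :
    framingMap M A j w = ∑ p, pathMap M p.2 (A p.1 (w p)) := by
  simp [framingMap]

lemma pathMap_apply_mem_range_framingMap {j : Q0} (p : Σ i : Q0, QPath src tgt i j) (e : E p.1) :
    pathMap M p.2 (A p.1 e) ∈ LinearMap.range (framingMap M A j) := by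
  classical
  refine ⟨Pi.single p e, ?_⟩
  rw [framingMap_apply, Finset.sum_eq_single p]
  · simp
  · intro q _ hq
    simp [Pi.single_eq_of_ne hq]
  · exact fun h => absurd (Finset.mem_univ p) h

lemma range_le_range_framingMap (j : Q0) :
    LinearMap.range (A j) ≤ LinearMap.range (framingMap M A j) := by
  rintro _ ⟨e, rfl⟩
  simpa [pathMap] using pathMap_apply_mem_range_framingMap M A ⟨j, .nil j⟩ e

lemma isSubrep_range_framingMap : IsSubrep M fun j => LinearMap.range (framingMap M A j) := by
  rintro a _ ⟨w, rfl⟩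
  rw [framingMap_apply, map_sum]
  exact Submodule.sum_mem _ fun p _ => by
    simpa [pathMap] using pathMap_apply_mem_range_framingMap M A ⟨p.1, .cons a p.2⟩ (w p)

variable {M A} in
lemma IsSubrep.range_framingMap_le {U : ∀ i, Submodule k (V i)} (hU : IsSubrep M U)
    (hA : ∀ i, LinearMap.range (A i) ≤ U i) (j : Q0) :
    LinearMap.range (framingMap M A j) ≤ U j := by
  rintro _ ⟨w, rfl⟩
  rw [framingMap_apply]
  exact Submodule.sum_mem _ fun p _ => hU.pathMap_mem p.2 (hA p.1 ⟨w p, rfl⟩)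

lemma surjective_framingMap_iff :
    (∀ j, Function.Surjective (framingMap M A j)) ↔
      ∀ U : ∀ i, Submodule k (V i), IsSubrep M U → (∀ i, LinearMap.range (A i) ≤ U i) →
        ∀ i, U i = ⊤ := by
  simp only [← LinearMap.range_eq_top]
  refine ⟨fun h U hU hA i => top_le_iff.mp (h i ▸ hU.range_framingMap_le hA i), fun h =>
    h _ (isSubrep_range_framingMap M A) (range_le_range_framingMap M A)⟩

end Framing

theorem statement2_general {k Q0 Q1 : Type} [Field k] [Fintype Q0]
    (src tgt : Q1 → Q0) [∀ i j, Fintype (QPath src tgt i j)]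
    (V : Q0 → Type) [∀ i, AddCommGroup (V i)] [∀ i, Module k (V i)]
    [∀ i, FiniteDimensional k (V i)]
    (E : Q0 → Type) [∀ i, AddCommGroup (E i)] [∀ i, Module k (E i)]
    (M : ∀ a : Q1, V (src a) →ₗ[k] V (tgt a))
    (A : ∀ i : Q0, E i →ₗ[k] V i) :
    List.TFAE
      [ (∀ (L : Submodule k k) (U : ∀ i : Q0, Submodule k (V i)),
          (∀ a : Q1, ∀ x ∈ U (src a), M a x ∈ U (tgt a)) →
          (L = ⊤ → ∀ i : Q0, LinearMap.range (A i) ≤ U i) →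
          (∑ i : Q0, (finrank k (V i) : ℤ)) * (finrank k L : ℤ)
            - ∑ i : Q0, (finrank k (U i) : ℤ) ≤ 0),
        (∀ (L : Submodule k k) (U : ∀ i : Q0, Submodule k (V i)),
          (∀ a : Q1, ∀ x ∈ U (src a), M a x ∈ U (tgt a)) →
          (L = ⊤ → ∀ i : Q0, LinearMap.range (A i) ≤ U i) →
          ¬(L = ⊥ ∧ ∀ i, U i = ⊥) → ¬(L = ⊤ ∧ ∀ i, U i = ⊤) →
          (∑ i : Q0, (finrank k (V i) : ℤ)) * (finrank k L : ℤ)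
            - ∑ i : Q0, (finrank k (U i) : ℤ) < 0),
        (¬ ∃ U : ∀ i : Q0, Submodule k (V i),
          (∀ a : Q1, ∀ x ∈ U (src a), M a x ∈ U (tgt a)) ∧
          (¬ ∀ i, U i = ⊤) ∧ (∀ i : Q0, LinearMap.range (A i) ≤ U i)),
        (∀ j : Q0, Function.Surjective
          (fun w : ∀ p : Σ i : Q0, QPath src tgt i j, E p.1 =>
            ∑ p : Σ i : Q0, QPath src tgt i j, pathMap M p.2 (A p.1 (w p)))) ] := by
  tfae_have 1 → 3 := by
    rintro h1 ⟨U, hU, hne, hA⟩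
    have hle := h1 ⊤ U hU fun _ => hA
    have hlt : ∑ i, (finrank k (U i) : ℤ) < ∑ i, (finrank k (V i) : ℤ) := by
      exact_mod_cast sum_finrank_lt_of_ne_top hne
    simp only [finrank_top, finrank_self, Nat.cast_one, mul_one] at hle
    omega
  tfae_have 3 → 2 := by
    intro h3 L U hU hA hbot htop
    rcases eq_bot_or_eq_top L with rfl | rfl
    · have hpos : 0 < ∑ i, (finrank k (U i) : ℤ) := by
        exact_mod_cast sum_finrank_pos_of_ne_bot fun h => hbot ⟨rfl, h⟩
      simpa only [finrank_bot, Nat.cast_zero, mul_zero, zero_sub, neg_neg_iff_pos]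
    · exact (htop ⟨rfl, not_not.mp fun hne => h3 ⟨U, hU, hne, hA rfl⟩⟩).elim
  tfae_have 2 → 1 := by
    intro h2 L U hU hA
    by_cases hbot : L = ⊥ ∧ ∀ i, U i = ⊥
    · obtain ⟨rfl, hUbot⟩ := hbot
      simp [fun i => Submodule.finrank_eq_zero.mpr (hUbot i)]
    by_cases htop : L = ⊤ ∧ ∀ i, U i = ⊤
    · obtain ⟨rfl, hUtop⟩ := htop
      have hdim : ∀ i, finrank k (U i) = finrank k (V i) := fun i => by rw [hUtop i, finrank_top]
      simp [hdim]
    exact (h2 L U hU hA hbot htop).le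
  tfae_have 3 ↔ 4 := by
    simp only [← framingMap_apply]
    rw [surjective_framingMap_iff]
    exact ⟨fun h U hU hA => not_not.mp fun hne => h ⟨U, hU, hne, hA⟩,
      fun h ⟨U, hU, hne, hA⟩ => hne (h U hU hA)⟩
  tfae_finish

/-- Engel–Reineke: for a framed pair `(M,A)` with `A i : E i →ₗ V i`, the following are
equivalent: (a) `(M,A)` is `c^α`-semi-stable, (b) `(M,A)` is `c^α`-stable, (c) no proper
subrepresentation of `M` contains all the images of the `A i`, (d) the homomorphism
`φ_{M,A} : P_β → M` is surjective at every vertex. -/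
theorem statement2 {k Q0 Q1 : Type} [Field k] [Fintype Q0] [Fintype Q1] [DecidableEq Q0]
    (src tgt : Q1 → Q0) [∀ i j, Fintype (QPath src tgt i j)]
    (V : Q0 → Type) [∀ i, AddCommGroup (V i)] [∀ i, Module k (V i)]
    [∀ i, FiniteDimensional k (V i)]
    (E : Q0 → Type) [∀ i, AddCommGroup (E i)] [∀ i, Module k (E i)]
    [∀ i, FiniteDimensional k (E i)]
    (M : ∀ a : Q1, V (src a) →ₗ[k] V (tgt a))
    (A : ∀ i : Q0, E i →ₗ[k] V i) :
    List.TFAE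
      [ (∀ (L : Submodule k k) (U : ∀ i : Q0, Submodule k (V i)),
          (∀ a : Q1, ∀ x ∈ U (src a), M a x ∈ U (tgt a)) →
          (L = ⊤ → ∀ i : Q0, LinearMap.range (A i) ≤ U i) →
          (∑ i : Q0, (finrank k (V i) : ℤ)) * (finrank k L : ℤ)
            - ∑ i : Q0, (finrank k (U i) : ℤ) ≤ 0),
        (∀ (L : Submodule k k) (U : ∀ i : Q0, Submodule k (V i)),
          (∀ a : Q1, ∀ x ∈ U (src a), M a x ∈ U (tgt a)) →
          (L = ⊤ → ∀ i : Q0, LinearMap.range (A i) ≤ U i) →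
          ¬(L = ⊥ ∧ ∀ i, U i = ⊥) → ¬(L = ⊤ ∧ ∀ i, U i = ⊤) →
          (∑ i : Q0, (finrank k (V i) : ℤ)) * (finrank k L : ℤ)
            - ∑ i : Q0, (finrank k (U i) : ℤ) < 0),
        (¬ ∃ U : ∀ i : Q0, Submodule k (V i),
          (∀ a : Q1, ∀ x ∈ U (src a), M a x ∈ U (tgt a)) ∧
          (¬ ∀ i, U i = ⊤) ∧ (∀ i : Q0, LinearMap.range (A i) ≤ U i)),
        (∀ j : Q0, Function.Surjective
          (fun w : ∀ p : Σ i : Q0, QPath src tgt i j, E p.1 =>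
            ∑ p : Σ i : Q0, QPath src tgt i j, pathMap M p.2 (A p.1 (w p)))) ] :=
  statement2_general src tgt V E M A
end

section
/- Define the representation P_β of Q by (P_β)_j := ⊕_{p : t(p)=j} E_{s(p)} (sum over all paths p in Q with target j), with structure map (P_β)_a for a ∈ Q1 sending the component of index p identically onto the component of index ap (the concatenation of p with the arrow a). For a pair (M,A) consisting of a representation M of Q on (V_i) and a family A = (A_i : E_i → V_i)_{i∈Q0}, the maps φ_{M,A,j} : (P_β)_j → V_j, (w_p)_p ↦ Σ_p M_p(A_{s(p)}(w_p)), form a homomorphism of representations φ_{M,A} : P_β → M, and (ker φ_{M,A,j})_{j∈Q0} is a subrepresentation of P_β. Let R⁰ be the set of all pairs (M,A) such that φ_{M,A,j} is surjective for every j ∈ Q0, and let the group G(α) := ∏_{i∈Q0} GL(V_i) act on R⁰ by g·(M,A) := ((g_{t(a)} M_a g_{s(a)}^{-1})_a, (g_i A_i)_i). Then the assignment (M,A) ↦ ker φ_{M,A} descends to a bijection from the set of G(α)-orbits on R⁰ onto the set of subrepresentations K of P_β with dim((P_β)_j / K_j) = α_j for every j ∈ Q0. -/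
open Module

open scoped Classical

/-- The linear map `φ_{M,A,j} : (P_β)_j = ⊕_{p : t(p) = j} E_{s(p)} → V_j`,
`(w_p)_p ↦ Σ_p M_p (A_{s(p)} (w_p))`. -/
def phiMap {k Q0 Q1 : Type} [Field k] [Fintype Q0] {src tgt : Q1 → Q0}
    [∀ i j, Fintype (QPath src tgt i j)]
    {V : Q0 → Type} [∀ i, AddCommGroup (V i)] [∀ i, Module k (V i)]
    (E : Q0 → Type) [∀ i, AddCommGroup (E i)] [∀ i, Module k (E i)]
    (M : ∀ a : Q1, V (src a) →ₗ[k] V (tgt a)) (A : ∀ i : Q0, E i →ₗ[k] V i) (j : Q0) :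
    (∀ p : Σ i : Q0, QPath src tgt i j, E p.1) →ₗ[k] V j :=
  ∑ p : Σ i : Q0, QPath src tgt i j,
    ((pathMap M p.2).comp (A p.1)).comp (LinearMap.proj p)

/-- The structure map `(P_β)_a : (P_β)_{s(a)} → (P_β)_{t(a)}` of the projective
representation `P_β`; it sends the component of index `p` identically onto the component of
index `ap` (concatenation of `p` with the arrow `a`). -/
noncomputable def Pmap {k Q0 Q1 : Type} [Field k] [Fintype Q0] {src tgt : Q1 → Q0}
    [∀ i j, Fintype (QPath src tgt i j)]
    (E : Q0 → Type) [∀ i, AddCommGroup (E i)] [∀ i, Module k (E i)] (a : Q1) :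
    (∀ p : Σ i : Q0, QPath src tgt i (src a), E p.1) →ₗ[k]
      (∀ p : Σ i : Q0, QPath src tgt i (tgt a), E p.1) :=
  ∑ p : Σ i : Q0, QPath src tgt i (src a),
    (LinearMap.single k (fun q : Σ i : Q0, QPath src tgt i (tgt a) => E q.1)
        ⟨p.1, QPath.cons a p.2⟩).comp (LinearMap.proj p)

section Helpers

variable {k Q0 Q1 : Type} [Field k] [Fintype Q0] {src tgt : Q1 → Q0}
    [∀ i j, Fintype (QPath src tgt i j)]
    {V : Q0 → Type} [∀ i, AddCommGroup (V i)] [∀ i, Module k (V i)]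
    {E : Q0 → Type} [∀ i, AddCommGroup (E i)] [∀ i, Module k (E i)]

theorem phiMap_apply (M : ∀ a : Q1, V (src a) →ₗ[k] V (tgt a)) (A : ∀ i : Q0, E i →ₗ[k] V i)
    (j : Q0) (x : ∀ p : Σ i : Q0, QPath src tgt i j, E p.1) :
    phiMap E M A j x = ∑ p : Σ i : Q0, QPath src tgt i j, pathMap M p.2 (A p.1 (x p)) := by
  simp [phiMap]

theorem phiMap_single (M : ∀ a : Q1, V (src a) →ₗ[k] V (tgt a)) (A : ∀ i : Q0, E i →ₗ[k] V i)
    (j : Q0) (p : Σ i : Q0, QPath src tgt i j) (v : E p.1) :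
    phiMap E M A j (Pi.single p v) = pathMap M p.2 (A p.1 v) := by
  rw [phiMap_apply]
  rw [Finset.sum_eq_single_of_mem p (Finset.mem_univ p)]
  · rw [Pi.single_eq_same]
  · intro q _ hq
    rw [Pi.single_eq_of_ne hq]
    simp

theorem Pmap_apply (a : Q1) (x : ∀ p : Σ i : Q0, QPath src tgt i (src a), E p.1) :
    Pmap (k := k) E a x = ∑ p : Σ i : Q0, QPath src tgt i (src a),
      Pi.single (⟨p.1, QPath.cons a p.2⟩ : Σ i : Q0, QPath src tgt i (tgt a)) (x p) := by
  simp [Pmap]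

theorem phiMap_comp_Pmap (M : ∀ a : Q1, V (src a) →ₗ[k] V (tgt a))
    (A : ∀ i : Q0, E i →ₗ[k] V i) (a : Q1) :
    (phiMap E M A (tgt a)).comp (Pmap E a) = (M a).comp (phiMap E M A (src a)) := by
  ext x
  simp only [LinearMap.comp_apply]
  rw [Pmap_apply, map_sum]
  simp only [phiMap_single]
  rw [phiMap_apply, map_sum]
  exact Finset.sum_congr rfl fun p _ => by simp [pathMap]

theorem pathMap_conj {W : Q0 → Type} [∀ i, AddCommGroup (W i)] [∀ i, Module k (W i)]
    (g : ∀ i, V i ≃ₗ[k] W i) (M : ∀ a : Q1, V (src a) →ₗ[k] V (tgt a))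
    {i j : Q0} (p : QPath src tgt i j) (v : V i) :
    pathMap (fun a => (g (tgt a)).toLinearMap ∘ₗ M a ∘ₗ (g (src a)).symm.toLinearMap) p
      (g i v) = g j (pathMap M p v) := by
  induction p with
  | nil => simp [pathMap]
  | cons a q ih => simp [pathMap, ih]

theorem phiMap_conj {W : Q0 → Type} [∀ i, AddCommGroup (W i)] [∀ i, Module k (W i)]
    (g : ∀ i, V i ≃ₗ[k] W i) (M : ∀ a : Q1, V (src a) →ₗ[k] V (tgt a))
    (A : ∀ i : Q0, E i →ₗ[k] V i) (j : Q0) :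
    phiMap E (fun a => (g (tgt a)).toLinearMap ∘ₗ M a ∘ₗ (g (src a)).symm.toLinearMap)
      (fun i => (g i).toLinearMap ∘ₗ A i) j = (g j).toLinearMap ∘ₗ phiMap E M A j := by
  refine LinearMap.ext fun x => ?_
  simp only [LinearMap.comp_apply, phiMap_apply, map_sum]
  refine Finset.sum_congr rfl fun p _ => ?_
  exact pathMap_conj g M p.2 (A p.1 (x p))

theorem exists_glue {D W : Type} [AddCommGroup D] [Module k D] [AddCommGroup W] [Module k W]
    (f f' : D →ₗ[k] W) (hf : Function.Surjective f) (hf' : Function.Surjective f')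
    (h : LinearMap.ker f = LinearMap.ker f') :
    ∃ e : W ≃ₗ[k] W, ∀ x, e (f x) = f' x := by
  have key : ∀ (g : D →ₗ[k] W) (hg : Function.Surjective g) (x : D),
      g.quotKerEquivOfSurjective hg (Submodule.Quotient.mk x) = g x := by
    intro g hg x
    simp [LinearMap.quotKerEquivOfSurjective, LinearMap.quotKerEquivRange_apply_mk]
  refine ⟨(f.quotKerEquivOfSurjective hf).symm.trans
    ((Submodule.quotEquivOfEq _ _ h).trans (f'.quotKerEquivOfSurjective hf')), fun x => ?_⟩
  have h1 : (f.quotKerEquivOfSurjective hf).symm (f x) = Submodule.Quotient.mk x := by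
    rw [← key f hf x, LinearEquiv.symm_apply_apply]
  simp [h1, Submodule.quotEquivOfEq_mk, key f' hf']

end Helpers

section Helpers2

variable {k Q0 Q1 : Type} [Field k] [Fintype Q0] {src tgt : Q1 → Q0}
    [∀ i j, Fintype (QPath src tgt i j)]
    {E : Q0 → Type} [∀ i, AddCommGroup (E i)] [∀ i, Module k (E i)]

theorem Pmap_single (a : Q1) (p : Σ i : Q0, QPath src tgt i (src a)) (v : E p.1) :
    Pmap (k := k) E a (Pi.single p v)
      = Pi.single (⟨p.1, QPath.cons a p.2⟩ : Σ i : Q0, QPath src tgt i (tgt a)) v := by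
  rw [Pmap_apply]
  rw [Finset.sum_eq_single_of_mem p (Finset.mem_univ p)]
  · rw [Pi.single_eq_same]
  · intro q _ hq
    rw [Pi.single_eq_of_ne hq]
    simp

end Helpers2

/-- `φ_{M,A} : P_β → M` is a homomorphism of representations, its kernels form a
subrepresentation of `P_β`, and `(M,A) ↦ ker φ_{M,A}` descends to a bijection from the
set of `G(α)`-orbits of pairs `(M,A)` with `φ_{M,A}` surjective onto the set of
subrepresentations `K` of `P_β` with `dim ((P_β)_j / K_j) = dim V_j` for all `j`. -/
theorem statement6 {k Q0 Q1 : Type} [Field k] [Fintype Q0] [Fintype Q1]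
    (src tgt : Q1 → Q0) [∀ i j, Fintype (QPath src tgt i j)]
    (V : Q0 → Type) [∀ i, AddCommGroup (V i)] [∀ i, Module k (V i)]
    [∀ i, FiniteDimensional k (V i)]
    (E : Q0 → Type) [∀ i, AddCommGroup (E i)] [∀ i, Module k (E i)]
    [∀ i, FiniteDimensional k (E i)] :
    -- φ_{M,A} is a homomorphism of representations P_β → M
    (∀ (M : ∀ a : Q1, V (src a) →ₗ[k] V (tgt a)) (A : ∀ i : Q0, E i →ₗ[k] V i) (a : Q1),
        (phiMap E M A (tgt a)).comp (Pmap E a) = (M a).comp (phiMap E M A (src a)))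
    ∧
    -- the kernels of φ_{M,A} form a subrepresentation of P_β
    (∀ (M : ∀ a : Q1, V (src a) →ₗ[k] V (tgt a)) (A : ∀ i : Q0, E i →ₗ[k] V i) (a : Q1),
        ∀ x ∈ LinearMap.ker (phiMap E M A (src a)),
          Pmap (k := k) E a x ∈ LinearMap.ker (phiMap E M A (tgt a)))
    ∧
    -- for (M,A) ∈ R⁰ the kernel has the correct codimension
    (∀ (M : ∀ a : Q1, V (src a) →ₗ[k] V (tgt a)) (A : ∀ i : Q0, E i →ₗ[k] V i),
        (∀ j : Q0, Function.Surjective (phiMap E M A j)) →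
        ∀ j : Q0,
          finrank k ((∀ p : Σ i : Q0, QPath src tgt i j, E p.1) ⧸
            LinearMap.ker (phiMap E M A j)) = finrank k (V j))
    ∧
    -- two points of R⁰ have the same kernel iff they lie in the same G(α)-orbit
    (∀ (M M' : ∀ a : Q1, V (src a) →ₗ[k] V (tgt a)) (A A' : ∀ i : Q0, E i →ₗ[k] V i),
        (∀ j : Q0, Function.Surjective (phiMap E M A j)) →
        (∀ j : Q0, Function.Surjective (phiMap E M' A' j)) →
        ((∀ j : Q0, LinearMap.ker (phiMap E M A j) = LinearMap.ker (phiMap E M' A' j)) ↔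
          ∃ g : ∀ i : Q0, V i ≃ₗ[k] V i,
            (∀ a : Q1,
              M' a = (g (tgt a)).toLinearMap ∘ₗ M a ∘ₗ (g (src a)).symm.toLinearMap) ∧
            (∀ i : Q0, A' i = (g i).toLinearMap ∘ₗ A i)))
    ∧
    -- every subrepresentation of P_β of the correct codimension arises as such a kernel
    (∀ K : ∀ j : Q0, Submodule k (∀ p : Σ i : Q0, QPath src tgt i j, E p.1),
        (∀ a : Q1, ∀ x ∈ K (src a), Pmap (k := k) E a x ∈ K (tgt a)) →
        (∀ j : Q0,
          finrank k ((∀ p : Σ i : Q0, QPath src tgt i j, E p.1) ⧸ K j) = finrank k (V j)) →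
        ∃ (M : ∀ a : Q1, V (src a) →ₗ[k] V (tgt a)) (A : ∀ i : Q0, E i →ₗ[k] V i),
          (∀ j : Q0, Function.Surjective (phiMap E M A j)) ∧
          ∀ j : Q0, LinearMap.ker (phiMap E M A j) = K j) := by
  classical
  refine ⟨fun M A a => phiMap_comp_Pmap M A a, ?_, ?_, ?_, ?_⟩
  · -- kernels form a subrepresentation
    intro M A a x hx
    have := LinearMap.congr_fun (phiMap_comp_Pmap M A a) x
    simp only [LinearMap.comp_apply] at this
    rw [LinearMap.mem_ker] at hx ⊢
    rw [this, hx, map_zero]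
  · -- codimension
    intro M A h j
    exact LinearEquiv.finrank_eq ((phiMap E M A j).quotKerEquivOfSurjective (h j))
  · -- same kernel iff same orbit
    intro M M' A A' hM hM'
    constructor
    · intro hker
      choose g hg using fun j =>
        exists_glue (phiMap E M A j) (phiMap E M' A' j) (hM j) (hM' j) (hker j)
      have hA : ∀ i : Q0, A' i = (g i).toLinearMap ∘ₗ A i := by
        intro i
        ext v
        have h1 := phiMap_single M A i ⟨i, QPath.nil i⟩ v
        have h2 := phiMap_single M' A' i ⟨i, QPath.nil i⟩ v
        simp only [pathMap, LinearMap.id_apply] at h1 h2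
        simp only [LinearMap.comp_apply, LinearEquiv.coe_coe]
        rw [← h2, ← h1, hg]
      have hMkey : ∀ (a : Q1) (v : V (src a)),
          M' a (g (src a) v) = g (tgt a) (M a v) := by
        intro a v
        obtain ⟨x, rfl⟩ := hM (src a) v
        have h1 := LinearMap.congr_fun (phiMap_comp_Pmap M A a) x
        have h2 := LinearMap.congr_fun (phiMap_comp_Pmap M' A' a) x
        simp only [LinearMap.comp_apply] at h1 h2
        rw [hg (src a) x, ← h2, ← hg (tgt a), h1]
      refine ⟨g, fun a => ?_, hA⟩
      ext v
      simp only [LinearMap.comp_apply, LinearEquiv.coe_coe]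
      rw [← hMkey a ((g (src a)).symm v), LinearEquiv.apply_symm_apply]
    · rintro ⟨g, hMg, hAg⟩ j
      have hM'eq : M' = fun a =>
          (g (tgt a)).toLinearMap ∘ₗ M a ∘ₗ (g (src a)).symm.toLinearMap := funext hMg
      have hA'eq : A' = fun i => (g i).toLinearMap ∘ₗ A i := funext hAg
      rw [hM'eq, hA'eq, phiMap_conj g M A j]
      ext x
      simp only [LinearMap.mem_ker, LinearMap.comp_apply, LinearEquiv.coe_coe,
        LinearEquiv.map_eq_zero_iff]
  · -- every subrepresentation of correct codimension is a kernel
    intro K hK hdim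
    set Mb : ∀ a : Q1, ((∀ p : Σ i : Q0, QPath src tgt i (src a), E p.1) ⧸ K (src a)) →ₗ[k]
        ((∀ p : Σ i : Q0, QPath src tgt i (tgt a), E p.1) ⧸ K (tgt a)) :=
      fun a => (K (src a)).liftQ ((K (tgt a)).mkQ ∘ₗ Pmap E a) (by
        intro x hx
        simp only [LinearMap.mem_ker, LinearMap.comp_apply, Submodule.mkQ_apply,
          Submodule.Quotient.mk_eq_zero]
        exact hK a x hx) with hMb
    set Ab : ∀ i : Q0, E i →ₗ[k] ((∀ p : Σ i' : Q0, QPath src tgt i' i, E p.1) ⧸ K i) :=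
      fun i => (K i).mkQ ∘ₗ
        LinearMap.single k (fun p : Σ i' : Q0, QPath src tgt i' i => E p.1)
          ⟨i, QPath.nil i⟩ with hAb
    have key : ∀ {i j : Q0} (p : QPath src tgt i j) (v : E i),
        pathMap (V := fun j => (∀ p : Σ i : Q0, QPath src tgt i j, E p.1) ⧸ K j) Mb p (Ab i v) = (K j).mkQ (Pi.single (⟨i, p⟩ : Σ i' : Q0,
          QPath src tgt i' j) v) := by
      intro i j p v
      induction p with
      | nil => simp [pathMap, hAb]
      | cons a q ih =>
        simp only [pathMap, LinearMap.comp_apply]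
        rw [ih]
        simp only [hMb, Submodule.mkQ_apply, Submodule.liftQ_apply, LinearMap.comp_apply]
        rw [Pmap_single]
    have hphi : ∀ j : Q0, phiMap (V := fun j => (∀ p : Σ i : Q0, QPath src tgt i j, E p.1) ⧸ K j) E Mb Ab j = (K j).mkQ := by
      intro j
      refine LinearMap.ext fun x => ?_
      rw [phiMap_apply]
      have : ∀ p : Σ i : Q0, QPath src tgt i j,
          pathMap (V := fun j => (∀ p : Σ i : Q0, QPath src tgt i j, E p.1) ⧸ K j) Mb p.2 (Ab p.1 (x p)) = (K j).mkQ (Pi.single p (x p)) := by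
        rintro ⟨i, p⟩
        exact key p (x ⟨i, p⟩)
      rw [Finset.sum_congr rfl fun p _ => this p, ← map_sum]
      rw [Finset.univ_sum_single]
    have e : ∀ j : Q0, ((∀ p : Σ i : Q0, QPath src tgt i j, E p.1) ⧸ K j) ≃ₗ[k] V j :=
      fun j => LinearEquiv.ofFinrankEq _ _ (hdim j)
    refine ⟨fun a => (e (tgt a)).toLinearMap ∘ₗ Mb a ∘ₗ (e (src a)).symm.toLinearMap,
      fun i => (e i).toLinearMap ∘ₗ Ab i, ?_, ?_⟩
    · intro j
      rw [phiMap_conj (V := fun j => (∀ p : Σ i : Q0, QPath src tgt i j, E p.1) ⧸ K j) e Mb Ab j, hphi j]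
      intro v
      obtain ⟨x, hx⟩ := (K j).mkQ_surjective ((e j).symm v)
      exact ⟨x, by simp [hx]⟩
    · intro j
      rw [phiMap_conj (V := fun j => (∀ p : Σ i : Q0, QPath src tgt i j, E p.1) ⧸ K j) e Mb Ab j, hphi j]
      ext x
      simp only [LinearMap.mem_ker, LinearMap.comp_apply, LinearEquiv.coe_coe,
        LinearEquiv.map_eq_zero_iff, Submodule.mkQ_apply, Submodule.Quotient.mk_eq_zero]
end

section
/- For each i let π_i : V → V_i ⊕ … ⊕ V_n be the projection along V_1 ⊕ … ⊕ V_{i−1}, and for i ≤ n−1 let pr_i : V_i ⊕ … ⊕ V_n → V_{i+1} ⊕ … ⊕ V_n be the projection along V_i. Then the assignment (U_1,…,U_n) ↦ (π_1^{-1}(U_1),…,π_n^{-1}(U_n)) is a bijection from the set of tuples (U_1,…,U_n) of subspaces U_i ⊆ V_i ⊕ … ⊕ V_n with dim U_i = α_i and pr_i(U_i) ⊆ U_{i+1} for i = 1,…,n−1, onto the set of flags F_1 ⊆ F_2 ⊆ … ⊆ F_n ⊆ V of subspaces of V with dim F_i = α_1 + … + α_i for all i and E_{i−1} ⊆ F_i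 for i = 2,…,n. -/
open Module

section

variable {k : Type} [Field k] {n : ℕ} (W : Fin n → Type)
  [∀ i, AddCommGroup (W i)] [∀ i, Module k (W i)]

/-- The projection of `V = V_1 ⊕ … ⊕ V_n` onto `V_{m+1} ⊕ … ⊕ V_n` (0-based: onto the
coordinates `≥ m`), along the first `m` summands. -/
def trunc (m : ℕ) : (∀ j, W j) →ₗ[k] (∀ j, W j) :=
  LinearMap.pi (fun j : Fin n =>
    if m ≤ (j : ℕ) then LinearMap.proj j else 0)

/-- The subspace `E_m = V_1 ⊕ … ⊕ V_m` of `V` (0-based: the coordinates `< m`). -/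
def Efl (m : ℕ) : Submodule k (∀ j, W j) where
  carrier := {f | ∀ j : Fin n, m ≤ (j : ℕ) → f j = 0}
  add_mem' := by
    intro f g hf hg j hj
    simp [Pi.add_apply, hf j hj, hg j hj]
  zero_mem' := by intro j hj; rfl
  smul_mem' := by
    intro c f hf j hj
    simp [Pi.smul_apply, hf j hj]

/-- The subspace `V_{m+1} ⊕ … ⊕ V_n` of `V` (0-based: the coordinates `≥ m`). -/
def Tl (m : ℕ) : Submodule k (∀ j, W j) where
  carrier := {f | ∀ j : Fin n, (j : ℕ) < m → f j = 0}
  add_mem' := by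
    intro f g hf hg j hj
    simp [Pi.add_apply, hf j hj, hg j hj]
  zero_mem' := by intro j hj; rfl
  smul_mem' := by
    intro c f hf j hj
    simp [Pi.smul_apply, hf j hj]

lemma mem_Efl {m : ℕ} {f : ∀ j, W j} :
    f ∈ Efl (k := k) W m ↔ ∀ j : Fin n, m ≤ (j : ℕ) → f j = 0 := Iff.rfl

lemma mem_Tl {m : ℕ} {f : ∀ j, W j} :
    f ∈ Tl (k := k) W m ↔ ∀ j : Fin n, (j : ℕ) < m → f j = 0 := Iff.rfl

lemma trunc_apply (m : ℕ) (f : ∀ j, W j) (j : Fin n) :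
    trunc (k := k) W m f j = if m ≤ (j : ℕ) then f j else 0 := by
  rw [trunc, LinearMap.pi_apply]
  split_ifs with h <;> simp [h]

lemma trunc_mem_Tl (m : ℕ) (f : ∀ j, W j) : trunc (k := k) W m f ∈ Tl (k := k) W m := by
  intro j hj
  rw [trunc_apply, if_neg (by omega)]

lemma trunc_of_mem_Tl {m : ℕ} {f : ∀ j, W j} (hf : f ∈ Tl (k := k) W m) :
    trunc (k := k) W m f = f := by
  funext j
  rw [trunc_apply]
  split_ifs with h
  · rfl
  · exact (hf j (by omega)).symm

lemma trunc_of_mem_Efl {m : ℕ} {f : ∀ j, W j} (hf : f ∈ Efl (k := k) W m) :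
    trunc (k := k) W m f = 0 := by
  funext j
  rw [trunc_apply]
  split_ifs with h
  · exact hf j h
  · rfl

lemma sub_trunc_mem_Efl (m : ℕ) (f : ∀ j, W j) :
    f - trunc (k := k) W m f ∈ Efl (k := k) W m := by
  intro j hj
  simp [trunc_apply, hj]

lemma range_trunc (m : ℕ) : LinearMap.range (trunc (k := k) W m) = Tl (k := k) W m := by
  apply le_antisymm
  · rintro x ⟨y, rfl⟩
    exact trunc_mem_Tl W m y
  · intro x hx
    exact ⟨x, trunc_of_mem_Tl W hx⟩

lemma ker_trunc (m : ℕ) : LinearMap.ker (trunc (k := k) W m) = Efl (k := k) W m := by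
  ext f
  constructor
  · intro hf j hj
    have := congrFun (LinearMap.mem_ker.1 hf) j
    rwa [trunc_apply, if_pos hj] at this
  · intro hf
    exact LinearMap.mem_ker.2 (trunc_of_mem_Efl W hf)

lemma trunc_trunc {m m' : ℕ} (h : m' ≤ m) (f : ∀ j, W j) :
    trunc (k := k) W m (trunc (k := k) W m' f) = trunc (k := k) W m f := by
  funext j
  simp only [trunc_apply]
  split_ifs with h1 h2
  · rfl
  · omega
  · rfl

lemma comap_trunc {m : ℕ} {U : Submodule k (∀ j, W j)} (hU : U ≤ Tl (k := k) W m) :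
    Submodule.comap (trunc (k := k) W m) U = U ⊔ Efl (k := k) W m := by
  apply le_antisymm
  · intro x hx
    have hx' : trunc (k := k) W m x ∈ U := hx
    have h2 := Submodule.add_mem (U ⊔ Efl (k := k) W m)
      (Submodule.mem_sup_left hx')
      (Submodule.mem_sup_right (sub_trunc_mem_Efl W m x))
    simpa using h2
  · rw [sup_le_iff]
    constructor
    · intro u hu
      show trunc (k := k) W m u ∈ U
      rw [trunc_of_mem_Tl W (hU hu)]; exact hu
    · intro e he
      show trunc (k := k) W m e ∈ U
      rw [trunc_of_mem_Efl W he]; exact U.zero_mem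

lemma inf_Efl {m : ℕ} {U : Submodule k (∀ j, W j)} (hU : U ≤ Tl (k := k) W m) :
    U ⊓ Efl (k := k) W m = ⊥ := by
  rw [eq_bot_iff]
  rintro x ⟨hx1, hx2⟩
  have : x = 0 := by
    funext j
    rcases lt_or_ge (j : ℕ) m with h | h
    · exact hU hx1 j h
    · exact hx2 j h
  simp [this]

def eflEquiv (m : ℕ) : Efl (k := k) W m ≃ₗ[k] ∀ j : {j : Fin n // (j : ℕ) < m}, W j where
  toFun f j := f.1 j.1
  invFun g := ⟨fun j => if h : (j : ℕ) < m then g ⟨j, h⟩ else 0, by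
    intro j hj
    exact dif_neg (by omega)⟩
  map_add' f g := rfl
  map_smul' c f := rfl
  left_inv f := by
    ext j
    dsimp
    split_ifs with h
    · rfl
    · exact (f.2 j (by omega)).symm
  right_inv g := by
    funext j
    dsimp
    rw [dif_pos j.2]

lemma finrank_Efl [∀ i, FiniteDimensional k (W i)] (m : ℕ) :
    finrank k (Efl (k := k) W m) =
      ∑ j ∈ Finset.univ.filter (fun j : Fin n => (j : ℕ) < m), finrank k (W j) := by
  rw [(eflEquiv (k := k) W m).finrank_eq, Module.finrank_pi_fintype]
  refine (Finset.sum_subtype _ (fun x => ?_) (fun j => finrank k (W j))).symm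
  simp

end


section

variable {k : Type} [Field k] {n : ℕ} {W : Fin n → Type}
  [∀ i, AddCommGroup (W i)] [∀ i, Module k (W i)] [∀ i, FiniteDimensional k (W i)]

lemma finrank_comap_trunc {m : ℕ} {U : Submodule k (∀ j, W j)}
    (hU : U ≤ Tl (k := k) W m) :
    finrank k (Submodule.comap (trunc (k := k) W m) U) =
      finrank k U + finrank k (Efl (k := k) W m) := by
  rw [comap_trunc W hU]
  have h := Submodule.finrank_sup_add_finrank_inf_eq U (Efl (k := k) W m)
  rw [inf_Efl W hU, finrank_bot] at h
  omega

lemma sum_le_split (i : Fin n) (f : Fin n → ℕ) :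
    ∑ j ∈ Finset.univ.filter (· ≤ i), f j =
      f i + ∑ j ∈ Finset.univ.filter (fun j : Fin n => (j : ℕ) < (i : ℕ)), f j := by
  have h : Finset.univ.filter (· ≤ i) =
      insert i (Finset.univ.filter (fun j : Fin n => (j : ℕ) < (i : ℕ))) := by
    ext j
    simp only [Finset.mem_insert, Finset.mem_filter, Finset.mem_univ, true_and,
      Fin.le_def, Fin.ext_iff]
    omega
  rw [h, Finset.sum_insert (by simp)]

lemma chain_mono {α : Type*} [Preorder α] (F : Fin n → α)
    (step : ∀ (i : Fin n) (h : (i : ℕ) + 1 < n), F i ≤ F ⟨(i : ℕ) + 1, h⟩) :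
    ∀ i j : Fin n, i ≤ j → F i ≤ F j := by
  suffices h : ∀ (m : ℕ) (i j : Fin n), (j : ℕ) ≤ m → i ≤ j → F i ≤ F j by
    intro i j hij; exact h (j : ℕ) i j le_rfl hij
  intro m
  induction m with
  | zero =>
    intro i j hj hij
    have : i = j := Fin.ext (by rw [Fin.le_def] at hij; omega)
    rw [this]
  | succ m ih =>
    intro i j hj hij
    rw [Fin.le_def] at hij
    rcases eq_or_lt_of_le hij with h1 | h1
    · have : i = j := Fin.ext h1
      rw [this]
    · rcases Nat.lt_or_ge (j : ℕ) (m + 1) with h2 | h2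
      · exact ih i j (by omega) (by rw [Fin.le_def]; omega)
      · have hjm : (j : ℕ) = m + 1 := by omega
        have hmn : m < n := by omega
        have hstep := step ⟨m, hmn⟩ (by simpa [hjm] using j.isLt)
        have hj' : (⟨m + 1, by omega⟩ : Fin n) = j := Fin.ext (by simp [hjm])
        refine le_trans (ih i ⟨m, hmn⟩ (by simp) (by rw [Fin.le_def]; simp; omega)) ?_
        rw [← hj']
        exact hstep

end

/-- The assignment `(U_1,…,U_n) ↦ (π_1⁻¹(U_1),…,π_n⁻¹(U_n))` is a bijection from the set of
tuples of subspaces `U_i ⊆ V_i ⊕ … ⊕ V_n` with `dim U_i = α_i` and `pr_i(U_i) ⊆ U_{i+1}`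
onto the set of flags `F_1 ⊆ … ⊆ F_n ⊆ V` with `dim F_i = α_1 + … + α_i` and
`E_{i−1} ⊆ F_i` for `i = 2,…,n`. (Here everything is indexed 0-based.) -/
theorem statement15 {k : Type} [Field k] {n : ℕ} (hn : 1 ≤ n) (W : Fin n → Type)
    [∀ i, AddCommGroup (W i)] [∀ i, Module k (W i)] [∀ i, FiniteDimensional k (W i)] :
    Set.BijOn
      (fun U : Fin n → Submodule k (∀ j, W j) =>
        fun i : Fin n => Submodule.comap (trunc W (i : ℕ)) (U i))
      {U : Fin n → Submodule k (∀ j, W j) |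
        (∀ i : Fin n, U i ≤ Tl W (i : ℕ)) ∧
        (∀ i : Fin n, finrank k (U i) = finrank k (W i)) ∧
        (∀ (i : Fin n) (h : (i : ℕ) + 1 < n),
          Submodule.map (trunc W ((i : ℕ) + 1)) (U i) ≤ U ⟨(i : ℕ) + 1, h⟩)}
      {F : Fin n → Submodule k (∀ j, W j) |
        (∀ i j : Fin n, i ≤ j → F i ≤ F j) ∧
        (∀ i : Fin n,
          finrank k (F i) = ∑ j ∈ Finset.univ.filter (· ≤ i), finrank k (W j)) ∧
        (∀ i : Fin n, 1 ≤ (i : ℕ) → Efl W (i : ℕ) ≤ F i)} := by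
  refine ⟨?_, ?_, ?_⟩
  · -- MapsTo
    rintro U ⟨hT, hdim, hcomp⟩
    refine ⟨?_, ?_, ?_⟩
    · refine chain_mono _ ?_
      intro i h x hx
      show trunc W ((i : ℕ) + 1) x ∈ U ⟨(i : ℕ) + 1, h⟩
      rw [← trunc_trunc W (Nat.le_succ (i : ℕ)) x]
      exact hcomp i h ⟨trunc W (i : ℕ) x, hx, rfl⟩
    · intro i
      show finrank k (Submodule.comap (trunc W (i : ℕ)) (U i)) = _
      rw [finrank_comap_trunc (hT i), hdim i, finrank_Efl, sum_le_split]
    · intro i _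
      intro e he
      show trunc W (i : ℕ) e ∈ U i
      rw [trunc_of_mem_Efl W he]
      exact (U i).zero_mem
  · -- InjOn
    intro U hU U' hU' heq
    funext i
    have h : Submodule.comap (trunc W (i : ℕ)) (U i) = Submodule.comap (trunc W (i : ℕ)) (U' i) :=
      congrFun heq i
    have h1 : ∀ (V : Fin n → Submodule k (∀ j, W j)), (∀ i, V i ≤ Tl (k := k) W (i : ℕ)) →
        Submodule.map (trunc W (i : ℕ)) (Submodule.comap (trunc W (i : ℕ)) (V i)) = V i := by
      intro V hV
      rw [Submodule.map_comap_eq, range_trunc, inf_eq_right.2 (hV i)]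
    calc U i = Submodule.map (trunc W (i : ℕ)) (Submodule.comap (trunc W (i : ℕ)) (U i)) :=
          (h1 U hU.1).symm
      _ = Submodule.map (trunc W (i : ℕ)) (Submodule.comap (trunc W (i : ℕ)) (U' i)) := by rw [h]
      _ = U' i := h1 U' hU'.1
  · -- SurjOn
    rintro F ⟨hmono, hdim, hE⟩
    have hEall : ∀ i : Fin n, Efl (k := k) W (i : ℕ) ≤ F i := by
      intro i
      rcases Nat.eq_zero_or_pos (i : ℕ) with h | h
      · intro e he
        have : e = 0 := funext fun j => he j (by omega)
        rw [this]; exact (F i).zero_mem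
      · exact hE i h
    have hmapTl : ∀ i : Fin n, Submodule.map (trunc W (i : ℕ)) (F i) ≤ Tl (k := k) W (i : ℕ) := by
      rintro i x ⟨y, _, rfl⟩
      exact trunc_mem_Tl W (i : ℕ) y
    have hcm : ∀ i : Fin n,
        Submodule.comap (trunc W (i : ℕ)) (Submodule.map (trunc W (i : ℕ)) (F i)) = F i := by
      intro i
      rw [Submodule.comap_map_eq, ker_trunc, sup_eq_left.2 (hEall i)]
    refine ⟨fun i => Submodule.map (trunc W (i : ℕ)) (F i), ⟨hmapTl, ?_, ?_⟩, ?_⟩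
    · intro i
      show finrank k (Submodule.map (trunc W (i : ℕ)) (F i)) = finrank k (W i)
      have h2 := finrank_comap_trunc (hmapTl i)
      rw [hcm i, hdim i, sum_le_split, finrank_Efl] at h2
      omega
    · rintro i h x ⟨y, ⟨z, hz, rfl⟩, rfl⟩
      refine ⟨z, hmono i ⟨(i : ℕ) + 1, h⟩ (by rw [Fin.le_def]; simp) hz, ?_⟩
      exact (trunc_trunc W (Nat.le_succ (i : ℕ)) z).symm
    · funext i
      exact hcm i
end
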